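/- Let M = SM(U) be a loopless and coloopless Schubert matroid on [n] of rank r. (a) The map sending a Delannoy path P associated to SM(U) to the pair (B_P, D_P), where D_P is the set of indices of the diagonal steps of P, is injective. (b) A Delannoy path P associated to SM(U) is admissible if and only if the basis B_P of M satisfies i(B_P) = 0 and e(B_P) = 1. -/

import Mathlib

open scoped Classical

namespace GPoly

/-- A step of a Delannoy path: east `+(1,0)`, north `+(0,1)` or diagonal `+(1,1)`. -/
inductive DStep : Type
  | east : DStep
  | north : DStep
  | diag : DStep
  deriving DecidableEq

/-- Horizontal displacement of a step. -/
def DStep.dx : DStep → ℕ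
  | .east => 1
  | .north => 0
  | .diag => 1

/-- Vertical displacement of a step. -/
def DStep.dy : DStep → ℕ
  | .east => 0
  | .north => 1
  | .diag => 1

/-- Position reached after the first `k` steps of `P`, starting at the point `s`. -/
def pathPos (s : ℕ × ℕ) (P : List DStep) (k : ℕ) : ℕ × ℕ :=
  (s.1 + ((P.take k).map DStep.dx).sum, s.2 + ((P.take k).map DStep.dy).sum)

/-- The Gale order: `U ≤ B` iff the increasing enumerations satisfy `u_ℓ ≤ b_ℓ`. -/
def galeLe {α : Type*} [LinearOrder α] (U B : Finset α) : Prop :=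
  List.Forall₂ (· ≤ ·) (U.sort (· ≤ ·)) (B.sort (· ≤ ·))

/-- Bases of the Schubert matroid `SM(U)` of rank `r` on `[n] = {1, …, n}`:
all `r`-subsets `B` of `[n]` with `U ≤ B` in the Gale order. -/
noncomputable def schubertBases (n r : ℕ) (U : Finset ℕ) : Finset (Finset ℕ) :=
  (Finset.Icc 1 n).powerset.filter fun B => B.card = r ∧ galeLe U B

/-- The point `p` lies weakly below the lattice path `path(U)`. -/
def belowPath (U : Finset ℕ) (p : ℕ × ℕ) : Prop :=
  p.2 ≤ (U ∩ Finset.Icc 1 (p.1 + p.2)).card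

/-- `path(U)` traverses the vertical unit segment from `(x, y)` to `(x, y+1)`
(by its north step number `x + y + 1`). -/
def uVertSeg (U : Finset ℕ) (x y : ℕ) : Prop :=
  x + y + 1 ∈ U ∧ (U ∩ Finset.Icc 1 (x + y + 1)).card = y + 1

/-- A Delannoy path associated to `SM(U)`: starts at `(1,1)`, ends at `(n-r, r)` and
stays weakly below `path(U)`. -/
def IsDelannoy (n r : ℕ) (U : Finset ℕ) (P : List DStep) : Prop :=
  pathPos (1, 1) P P.length = (n - r, r) ∧
    ∀ k ≤ P.length, belowPath U (pathPos (1, 1) P k)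

/-- Admissible Delannoy path associated to `SM(U)`. -/
def IsAdmissible (n r : ℕ) (U : Finset ℕ) (P : List DStep) : Prop :=
  IsDelannoy n r U P ∧
    ∀ (k : ℕ) (h : k < P.length),
      (P.get ⟨k, h⟩ = DStep.north →
        pathPos (1, 1) P (k + 1) = (n - r, r) ∨
          ¬ uVertSeg U (pathPos (1, 1) P k).1 (pathPos (1, 1) P k).2) ∧
      (P.get ⟨k, h⟩ = DStep.diag →
        belowPath U ((pathPos (1, 1) P k).1, (pathPos (1, 1) P k).2 + 1) ∧
          ¬ uVertSeg U (pathPos (1, 1) P k).1 (pathPos (1, 1) P k).2)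

/-- Number of diagonal steps of a path. -/
def diagCount (P : List DStep) : ℕ := (P.filter (· = DStep.diag)).length

/-- The set of indices (0-based) of the diagonal steps of `P`. -/
def diagIndices (P : List DStep) : Finset ℕ :=
  (Finset.range P.length).filter fun k => P.getD k DStep.east = DStep.diag

/-- Replace a diagonal step by a north step followed by an east step. -/
def expandNE : DStep → List DStep
  | DStep.diag => [DStep.north, DStep.east]
  | s => [s]

/-- Replace a diagonal step by an east step followed by a north step. -/
def expandEN : DStep → List DStep
  | DStep.diag => [DStep.east, DStep.north]
  | s => [s]

/-- The full lattice path of `B_P`: an east step, a north step, then the steps of `P`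
with each diagonal step replaced by a north step immediately followed by an east step. -/
def fullPath (P : List DStep) : List DStep :=
  DStep.east :: DStep.north :: (P.map expandNE).flatten

/-- The subset of `[n]` whose `path` is the given (diagonal-free) list of steps:
the set of (1-based) positions of the north steps. -/
def northSet (L : List DStep) : Finset ℕ :=
  ((Finset.range L.length).filter fun k => L.getD k DStep.east = DStep.north).image (· + 1)

/-- The basis `B_P` associated to a Delannoy path `P`. -/
def delannoyBasis (P : List DStep) : Finset ℕ := northSet (fullPath P)

/-! ### Matroid notions for a family of bases -/

/-- `S` is independent for the basis family `ℬ`: it is contained in some basis. -/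
def famIndep (ℬ : Finset (Finset ℕ)) (S : Finset ℕ) : Prop := ∃ B ∈ ℬ, S ⊆ B

/-- `C` is a circuit for the basis family `ℬ`: a minimal dependent set. -/
def famCircuit (ℬ : Finset (Finset ℕ)) (C : Finset ℕ) : Prop :=
  ¬ famIndep ℬ C ∧ ∀ C' ⊂ C, famIndep ℬ C'

/-- The dual basis family on the ground set `E`: complements of bases. -/
noncomputable def famDual (E : Finset ℕ) (ℬ : Finset (Finset ℕ)) : Finset (Finset ℕ) :=
  ℬ.image fun B => E \ B

/-- `e ∉ B` is externally active: `e` is the smallest element of the unique circuit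
contained in `B ∪ {e}`. -/
def ExtActive (E : Finset ℕ) (ℬ : Finset (Finset ℕ)) (B : Finset ℕ) (e : ℕ) : Prop :=
  e ∈ E ∧ e ∉ B ∧
    ∃ C, C ⊆ insert e B ∧ famCircuit ℬ C ∧ e ∈ C ∧ ∀ x ∈ C, e ≤ x

/-- `i ∈ B` is internally active: `i` is the smallest element of the unique cocircuit
contained in `(E ∖ B) ∪ {i}`. -/
def IntActive (E : Finset ℕ) (ℬ : Finset (Finset ℕ)) (B : Finset ℕ) (i : ℕ) : Prop :=
  i ∈ B ∧
    ∃ C, C ⊆ insert i (E \ B) ∧ famCircuit (famDual E ℬ) C ∧ i ∈ C ∧ ∀ x ∈ C, i ≤ x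

/-- External activity `e(B)`. -/
noncomputable def extAct (E : Finset ℕ) (ℬ : Finset (Finset ℕ)) (B : Finset ℕ) : ℕ :=
  (E.filter (ExtActive E ℬ B)).card

/-- Internal activity `i(B)`. -/
noncomputable def intAct (E : Finset ℕ) (ℬ : Finset (Finset ℕ)) (B : Finset ℕ) : ℕ :=
  (E.filter (IntActive E ℬ B)).card

/-- The statistic `α(B)`: the number of `i ∈ B` such that `B' = (B ∖ {i}) ∪ {i+1}`
is a basis with `e(B') = e(B)` and `i(B') = i(B)`. -/
noncomputable def alphaStat (E : Finset ℕ) (ℬ : Finset (Finset ℕ)) (B : Finset ℕ) : ℕ :=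
  (B.filter fun i =>
    insert (i + 1) (B.erase i) ∈ ℬ ∧
      extAct E ℬ (insert (i + 1) (B.erase i)) = extAct E ℬ B ∧
      intAct E ℬ (insert (i + 1) (B.erase i)) = intAct E ℬ B).card

/-- The rank function determined by a family of bases. -/
noncomputable def famRank (ℬ : Finset (Finset ℕ)) (A : Finset ℕ) : ℕ :=
  ℬ.sup fun B => (A ∩ B).card

/-- The β-invariant: `β(M) = (−1)^{rk(E)} Σ_{A ⊆ E} (−1)^{|A|} rk(A)`. -/
noncomputable def betaInv (E : Finset ℕ) (ℬ : Finset (Finset ℕ)) : ℤ :=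
  (-1) ^ famRank ℬ E * ∑ A ∈ E.powerset, (-1) ^ A.card * (famRank ℬ A : ℤ)

/-- `ℬ` is the collection of bases of a matroid with ground set `E`:
it is a nonempty family of subsets of `E` satisfying the basis exchange property. -/
def IsBasisFamily (E : Finset ℕ) (ℬ : Finset (Finset ℕ)) : Prop :=
  ℬ.Nonempty ∧ (∀ B ∈ ℬ, B ⊆ E) ∧
    ∀ B₁ ∈ ℬ, ∀ B₂ ∈ ℬ, ∀ x ∈ B₁ \ B₂, ∃ y ∈ B₂ \ B₁, insert y (B₁.erase x) ∈ ℬ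

/-- Two elements lie in a common component: they are equal or in a common circuit. -/
def connRel (ℬ : Finset (Finset ℕ)) (e f : ℕ) : Prop :=
  e = f ∨ ∃ C, famCircuit ℬ C ∧ e ∈ C ∧ f ∈ C

/-- The number of connected components of the matroid with bases `ℬ` on `E`. -/
noncomputable def numComponents (E : Finset ℕ) (ℬ : Finset (Finset ℕ)) : ℕ :=
  Set.ncard {S : Set ℕ | ∃ e ∈ E, S = {f | f ∈ E ∧ Relation.EqvGen (connRel ℬ) e f}}

/-- The matroid with bases `ℬ` on ground set `E` is connected. -/
def IsConnectedFam (E : Finset ℕ) (ℬ : Finset (Finset ℕ)) : Prop :=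
  E.Nonempty ∧ ∀ e ∈ E, ∀ f ∈ E, Relation.EqvGen (connRel ℬ) e f

/-- Series-parallel matroid: isomorphic to `U_{0,1}` or `U_{1,1}`
(a single loop or a single coloop), or connected with β-invariant `1`. -/
def IsSeriesParallel (E : Finset ℕ) (ℬ : Finset (Finset ℕ)) : Prop :=
  (E.card = 1 ∧ (ℬ = {∅} ∨ ℬ = {E})) ∨ (IsConnectedFam E ℬ ∧ betaInv E ℬ = 1)

/-- The bases of the restriction of the matroid with bases `ℬ` to the set `F`:
the maximal intersections of bases with `F`. -/
noncomputable def famRestrict (ℬ : Finset (Finset ℕ)) (F : Finset ℕ) : Finset (Finset ℕ) :=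
  (ℬ.image (· ∩ F)).filter fun S => ∀ T ∈ ℬ.image (· ∩ F), S ⊆ T → S = T

/-- The matroid with bases `ℬ` on `E` is a direct sum of series-parallel matroids. -/
def IsDirectSumOfSeriesParallel (E : Finset ℕ) (ℬ : Finset (Finset ℕ)) : Prop :=
  ∃ parts : Finset (Finset ℕ),
    (↑parts : Set (Finset ℕ)).PairwiseDisjoint id ∧
    parts.sup id = E ∧
    (∀ S ∈ parts, IsSeriesParallel S (famRestrict ℬ S)) ∧
    ℬ = E.powerset.filter fun B => ∀ S ∈ parts, B ∩ S ∈ famRestrict ℬ S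

/-! ### Base polytopes -/

/-- The indicator vector of `B ⊆ E`, as a point of `ℝ^E`. -/
noncomputable def basisVector (E : Finset ℕ) (B : Finset ℕ) : ↑E → ℝ :=
  fun e => if (e : ℕ) ∈ B then 1 else 0

/-- The base polytope of the matroid with bases `ℬ` on `E`:
the convex hull in `ℝ^E` of the indicator vectors of the bases. -/
noncomputable def basePolytope (E : Finset ℕ) (ℬ : Finset (Finset ℕ)) : Set (↑E → ℝ) :=
  convexHull ℝ (basisVector E '' (↑ℬ : Set (Finset ℕ)))

/-- The indicator function `ℝ^E → ℤ` of the base polytope. -/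
noncomputable def polyInd (E : Finset ℕ) (ℬ : Finset (Finset ℕ)) : (↑E → ℝ) → ℤ :=
  fun x => if x ∈ basePolytope E ℬ then 1 else 0

/-- The indicator function `ℝ^E → ℤ` of the relative interior of the base polytope. -/
noncomputable def relintInd (E : Finset ℕ) (ℬ : Finset (Finset ℕ)) : (↑E → ℝ) → ℤ :=
  fun x => if x ∈ intrinsicInterior ℝ (basePolytope E ℬ) then 1 else 0

/-! ### Cyclic flats and the cyclic chain lattice -/

/-- `F` is a flat of the matroid with bases `ℬ` on `E`. -/
def IsFlat (E : Finset ℕ) (ℬ : Finset (Finset ℕ)) (F : Finset ℕ) : Prop :=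
  F ⊆ E ∧ ∀ e ∈ E, famRank ℬ (insert e F) = famRank ℬ F → e ∈ F

/-- `F` is a cyclic flat: a flat whose restriction has no coloops. -/
def IsCyclicFlat (E : Finset ℕ) (ℬ : Finset (Finset ℕ)) (F : Finset ℕ) : Prop :=
  IsFlat E ℬ F ∧ ∀ e ∈ F, ¬ (∀ S ∈ famRestrict ℬ F, e ∈ S)

/-- The set of cyclic flats. -/
noncomputable def cyclicFlats (E : Finset ℕ) (ℬ : Finset (Finset ℕ)) : Finset (Finset ℕ) :=
  E.powerset.filter (IsCyclicFlat E ℬ)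

/-- A chain of cyclic flats containing the minimum and maximum of the lattice of
cyclic flats; these are the elements (other than the top `1̂`) of the cyclic
chain lattice. -/
def IsCyclicChain (E : Finset ℕ) (ℬ : Finset (Finset ℕ)) (C : Finset (Finset ℕ)) : Prop :=
  ↑C ⊆ (cyclicFlats E ℬ : Set (Finset ℕ)) ∧ IsChain (· ⊆ ·) (↑C : Set (Finset ℕ)) ∧
    (∃ F ∈ C, ∀ G ∈ cyclicFlats E ℬ, F ⊆ G) ∧
    (∃ F ∈ C, ∀ G ∈ cyclicFlats E ℬ, G ⊆ F)

/-- The set of chains of cyclic flats containing the minimum and the maximum. -/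
noncomputable def cyclicChains (E : Finset ℕ) (ℬ : Finset (Finset ℕ)) :
    Finset (Finset (Finset ℕ)) :=
  (cyclicFlats E ℬ).powerset.filter (IsCyclicChain E ℬ)

/-- The rank function `A ↦ min_{Z ∈ C} (rk_M(Z) + |A ∖ Z|)` associated to a chain `C`. -/
noncomputable def chainRank (ℬ : Finset (Finset ℕ)) (C : Finset (Finset ℕ))
    (A : Finset ℕ) : ℕ :=
  if h : C.Nonempty then C.inf' h fun Z => famRank ℬ Z + (A \ Z).card else A.card

/-- The bases of the matroid on `E` with rank function `rk`:
the subsets `B ⊆ E` with `rk B = |B| = rk E`. -/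
noncomputable def basesOfRank (E : Finset ℕ) (rk : Finset ℕ → ℕ) : Finset (Finset ℕ) :=
  E.powerset.filter fun B => rk B = B.card ∧ rk B = rk E

/-- The bases of the Schubert matroid `S_C` associated to a chain `C` of cyclic flats. -/
noncomputable def chainSchubert (E : Finset ℕ) (ℬ : Finset (Finset ℕ))
    (C : Finset (Finset ℕ)) : Finset (Finset ℕ) :=
  basesOfRank E (chainRank ℬ C)

/-- The point reached by `path(S)` after `k` steps. -/
def pathPoint (S : Finset ℕ) (k : ℕ) : ℕ × ℕ :=
  (k - (S ∩ Finset.Icc 1 k).card, (S ∩ Finset.Icc 1 k).card)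

/-!
Write `prefixCount X k = #(X ∩ [1, k])` for the height of `path(X)` after `k` steps. The Gale
condition `U ≤ B` says that `path(B)` stays weakly below `path(U)`, and `path(B_P)` passes
through every vertex of `P`. Both activities of a basis `B` of `SM(U)` are read off the two
paths by exchange arguments: `e ∉ B` is externally active iff `e < min B`, and `i ∈ B` is
internally active iff `path(B)` touches `path(U)` just before its north step `i`. As
`path(B_P)` starts with an east and a north step, `e(B_P) = 1`. A touch before the north step
leaving a vertex of `P` means that this step of `P` runs along `path(U)`, which admissibility
forbids except for the last step, where `n ∉ U` (no coloops) excludes it; the north step `2`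
never follows a touch because `1 ∈ U` (no loops). Injectivity: `B_P` determines the expanded
path, and the diagonal positions say how to contract it.
-/

open Finset

theorem forall₂_le_iff_countP_le {α : Type*} [LinearOrder α] :
    ∀ {u b : List α}, u.Pairwise (· ≤ ·) → b.Pairwise (· ≤ ·) → u.length = b.length →
      (List.Forall₂ (· ≤ ·) u b ↔ ∀ a, b.countP (· ≤ a) ≤ u.countP (· ≤ a))
  | [], [], _, _, _ => by simp
  | x :: u, y :: b, hu, hb, hlen => by
    rw [List.pairwise_cons] at hu hb
    rw [List.forall₂_cons, forall₂_le_iff_countP_le hu.2 hb.2 (by simpa using hlen)]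
    simp only [List.countP_cons, decide_eq_true_eq]
    constructor
    · rintro ⟨hxy, h⟩ a
      have := h a
      split_ifs <;> grind
    · intro h
      have hxy : x ≤ y := by
        by_contra! hyx
        have hu0 : u.countP (· ≤ y) = 0 :=
          List.countP_eq_zero.2 fun z hz => by simpa using hyx.trans_le (hu.1 z hz)
        simpa [hu0, hyx.not_ge] using h y
      refine ⟨hxy, fun a => ?_⟩
      by_cases hya : y ≤ a
      · simpa [hya, hxy.trans hya] using h a
      · have hb0 : b.countP (· ≤ a) = 0 :=
          List.countP_eq_zero.2 fun z hz => by simpa using (lt_of_not_ge hya).trans_le (hb.1 z hz)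
        simp [hb0]

theorem galeLe_iff {α : Type*} [LinearOrder α] {U B : Finset α} :
    galeLe U B ↔ #U = #B ∧ ∀ a, #{x ∈ B | x ≤ a} ≤ #{x ∈ U | x ≤ a} := by
  have hcount : ∀ (s : Finset α) a, (s.sort (· ≤ ·)).countP (· ≤ a) = #{x ∈ s | x ≤ a} := by
    intro s a
    rw [← Multiset.coe_countP, Finset.sort_eq, Multiset.countP_eq_card_filter]
    rfl
  constructor
  · intro h
    have hlen := h.length_eq
    rw [Finset.length_sort, Finset.length_sort] at hlen
    refine ⟨hlen, fun a => ?_⟩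
    rw [← hcount, ← hcount]
    exact ((forall₂_le_iff_countP_le (Finset.pairwise_sort _ _) (Finset.pairwise_sort _ _)
      (by simpa using hlen)).1 h) a
  · rintro ⟨hlen, h⟩
    refine (forall₂_le_iff_countP_le (Finset.pairwise_sort _ _) (Finset.pairwise_sort _ _)
      (by simpa using hlen)).2 fun a => ?_
    rw [hcount, hcount]
    exact h a

/-- The height of `path(X)` after `k` steps, as in `pathPoint`. -/
def prefixCount (X : Finset ℕ) (k : ℕ) : ℕ := #(X ∩ Icc 1 k)

theorem prefixCount_zero (X : Finset ℕ) : prefixCount X 0 = 0 := by simp [prefixCount]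

theorem prefixCount_eq_card_filter {X : Finset ℕ} (hX : 0 ∉ X) (k : ℕ) :
    prefixCount X k = #{x ∈ X | x ≤ k} := by
  unfold prefixCount
  congr 1
  ext x
  simp only [mem_inter, mem_Icc, mem_filter]
  constructor
  · rintro ⟨hx, -, hxk⟩; exact ⟨hx, hxk⟩
  · rintro ⟨hx, hxk⟩; exact ⟨hx, Nat.pos_of_ne_zero (by rintro rfl; exact hX hx), hxk⟩

theorem prefixCount_succ (X : Finset ℕ) (k : ℕ) :
    prefixCount X (k + 1) = prefixCount X k + if k + 1 ∈ X then 1 else 0 := by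
  unfold prefixCount
  rw [← insert_Icc_right_eq_Icc_add_one (by omega)]
  split_ifs with h
  · rw [inter_insert_of_mem h, card_insert_of_notMem (by simp)]
  · rw [inter_insert_of_notMem h, add_zero]

theorem prefixCount_mono (X : Finset ℕ) : Monotone (prefixCount X) :=
  fun _ _ h => card_le_card (inter_subset_inter_left (Icc_subset_Icc_right h))

theorem prefixCount_succ_le (X : Finset ℕ) (k : ℕ) :
    prefixCount X (k + 1) ≤ prefixCount X k + 1 := by
  rw [prefixCount_succ]; split_ifs <;> omega

theorem prefixCount_lt_succ_iff {X : Finset ℕ} {k : ℕ} :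
    prefixCount X k < prefixCount X (k + 1) ↔ k + 1 ∈ X := by
  rw [prefixCount_succ]; split_ifs with hk <;> simp [hk]

theorem prefixCount_of_subset_Icc {X : Finset ℕ} {n k : ℕ} (hX : X ⊆ Icc 1 n) (hk : n ≤ k) :
    prefixCount X k = #X := by
  rw [prefixCount, inter_eq_left.2 (hX.trans (Icc_subset_Icc_right hk))]

theorem prefixCount_add_card_filter_lt {X : Finset ℕ} (hX : 0 ∉ X) (k : ℕ) :
    prefixCount X k + #{x ∈ X | k < x} = #X := by
  simpa [prefixCount_eq_card_filter hX] using card_filter_add_card_filter_not (s := X) (· ≤ k)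

theorem prefixCount_insert {X : Finset ℕ} {y : ℕ} (hy : y ∉ X) (k : ℕ) :
    prefixCount (insert y X) k = prefixCount X k + if y ∈ Icc 1 k then 1 else 0 := by
  unfold prefixCount
  split_ifs with h
  · rw [insert_inter_of_mem h, card_insert_of_notMem (by simp [hy])]
  · rw [insert_inter_of_notMem h, add_zero]

theorem prefixCount_erase_add {X : Finset ℕ} {x : ℕ} (hx : x ∈ X) (k : ℕ) :
    prefixCount (X.erase x) k + (if x ∈ Icc 1 k then 1 else 0) = prefixCount X k := by
  unfold prefixCount
  rw [erase_inter]
  split_ifs with h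
  · rw [card_erase_add_one (mem_inter.2 ⟨hx, h⟩)]
  · rw [erase_eq_of_notMem (fun h' => h (mem_inter.1 h').2), add_zero]

theorem exists_notMem_of_prefixCount_lt {B U : Finset ℕ} :
    ∀ {m : ℕ}, prefixCount B m < prefixCount U m →
      ∃ y ∈ Icc 1 m, y ∉ B ∧ ∀ k, y ≤ k → k ≤ m → prefixCount B k < prefixCount U k
  | 0, h => by simp [prefixCount_zero] at h
  | m + 1, h => by
    by_cases hm : m + 1 ∈ B
    · have hlt : prefixCount B m < prefixCount U m := by
        have := prefixCount_succ_le U m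
        rw [prefixCount_succ, if_pos hm] at h
        omega
      obtain ⟨y, hy, hyB, hgap⟩ := exists_notMem_of_prefixCount_lt hlt
      refine ⟨y, by simp only [mem_Icc] at hy ⊢; omega, hyB, fun k hyk hkm => ?_⟩
      rcases Nat.lt_or_ge k (m + 1) with hk | hk
      · exact hgap k hyk (by omega)
      · rwa [show k = m + 1 by omega]
    · exact ⟨m + 1, by simp, hm, fun k h1 h2 => by rwa [show k = m + 1 by omega]⟩

section Schubert

variable {n r : ℕ} {U : Finset ℕ}

theorem mem_schubertBases_iff (hUsub : U ⊆ Icc 1 n) (hUcard : #U = r) {B : Finset ℕ} :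
    B ∈ schubertBases n r U ↔ B ⊆ Icc 1 n ∧ #B = r ∧ ∀ k, prefixCount B k ≤ prefixCount U k := by
  have h0 : ∀ {X : Finset ℕ}, X ⊆ Icc 1 n → 0 ∉ X := fun hX h0 => by simpa using hX h0
  rw [schubertBases, mem_filter, mem_powerset, galeLe_iff, hUcard]
  refine and_congr_right fun hB => and_congr_right fun hBcard => ?_
  simp only [prefixCount_eq_card_filter (h0 hB), prefixCount_eq_card_filter (h0 hUsub)]
  exact ⟨fun h => h.2, fun h => ⟨hBcard.symm, h⟩⟩

theorem insert_erase_mem_schubertBases (hUsub : U ⊆ Icc 1 n) (hUcard : #U = r)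
    {B : Finset ℕ} (hB : B ∈ schubertBases n r U) {x y : ℕ} (hx : x ∈ B) (hy : y ∉ B)
    (hyn : y ∈ Icc 1 n)
    (hslack : ∀ k, y ≤ k → k < x → prefixCount B k < prefixCount U k) :
    insert y (B.erase x) ∈ schubertBases n r U := by
  rw [mem_schubertBases_iff hUsub hUcard] at hB ⊢
  obtain ⟨hBsub, hBcard, hBU⟩ := hB
  have hx1 : 1 ≤ x := (mem_Icc.1 (hBsub hx)).1
  have hy1 : 1 ≤ y := (mem_Icc.1 hyn).1
  have hyB : y ∉ B.erase x := fun h => hy (mem_of_mem_erase h)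
  refine ⟨insert_subset hyn ((erase_subset x B).trans hBsub), ?_, fun k => ?_⟩
  · rw [card_insert_of_notMem hyB, card_erase_add_one hx, hBcard]
  · have hins := prefixCount_insert hyB k
    have hers := prefixCount_erase_add hx k
    have := hBU k
    simp only [mem_Icc, hx1, hy1, true_and] at hins hers
    split_ifs at hins hers with hyk hxk
    · omega
    · have := hslack k hyk (by omega)
      omega
    all_goals omega

theorem one_mem_of_mem_schubertBases (hUsub : U ⊆ Icc 1 n) (hUcard : #U = r)
    {B : Finset ℕ} (hB : B ∈ schubertBases n r U) (h1B : 1 ∈ B) : 1 ∈ U := by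
  have hBU := ((mem_schubertBases_iff hUsub hUcard).1 hB).2.2 1
  have hB1 : prefixCount B 1 = 1 := by rw [prefixCount_succ, prefixCount_zero, if_pos h1B]
  exact prefixCount_lt_succ_iff (k := 0) |>.1 (by rw [prefixCount_zero, zero_add]; omega)

theorem notMem_of_notMem_schubertBases (hUsub : U ⊆ Icc 1 n) (hUcard : #U = r)
    {B : Finset ℕ} (hB : B ∈ schubertBases n r U) (hnB : n ∉ B) : n ∉ U := by
  intro hnU
  obtain ⟨hBsub, hBcard, hBU⟩ := (mem_schubertBases_iff hUsub hUcard).1 hB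
  obtain ⟨m, rfl⟩ : ∃ m, n = m + 1 := ⟨n - 1, by have := (mem_Icc.1 (hUsub hnU)).1; omega⟩
  have hB' := prefixCount_succ B m
  have hU' := prefixCount_succ U m
  rw [prefixCount_of_subset_Icc hBsub le_rfl, hBcard, if_neg hnB] at hB'
  rw [prefixCount_of_subset_Icc hUsub le_rfl, hUcard, if_pos hnU] at hU'
  have := hBU m
  omega

end Schubert

section Circuits

variable {ℬ : Finset (Finset ℕ)}

theorem famIndep.mono {S T : Finset ℕ} (hST : S ⊆ T) (hT : famIndep ℬ T) : famIndep ℬ S :=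
  let ⟨B, hB, hTB⟩ := hT
  ⟨B, hB, hST.trans hTB⟩

theorem exists_famCircuit_subset {S : Finset ℕ} (hS : ¬ famIndep ℬ S) :
    ∃ C ⊆ S, famCircuit ℬ C := by
  obtain ⟨C, hC, hmin⟩ := exists_min_image {T ∈ S.powerset | ¬ famIndep ℬ T} card
    ⟨S, by simpa using hS⟩
  rw [mem_filter, mem_powerset] at hC
  refine ⟨C, hC.1, hC.2, fun C' hC' => ?_⟩
  by_contra hC'dep
  have := hmin C' (by simpa using ⟨hC'.subset.trans hC.1, hC'dep⟩)
  exact (card_lt_card hC').not_ge this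

theorem exists_famCircuit_mem {B D : Finset ℕ} {e : ℕ} (hB : famIndep ℬ B)
    (hDB : D ⊆ insert e B) (hD : ¬ famIndep ℬ D) : ∃ C ⊆ D, famCircuit ℬ C ∧ e ∈ C := by
  obtain ⟨C, hCD, hC⟩ := exists_famCircuit_subset hD
  refine ⟨C, hCD, hC, ?_⟩
  by_contra heC
  exact hC.1 (hB.mono fun x hx => (mem_insert.1 (hDB (hCD hx))).resolve_left
    (fun h => heC (h ▸ hx)))

theorem mem_of_famCircuit_of_subset_insert {C S : Finset ℕ} {e x : ℕ} (hC : famCircuit ℬ C)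
    (hCS : C ⊆ insert e S) (hx : famIndep ℬ (insert e (S.erase x))) : x ∈ C := by
  by_contra hxC
  refine hC.1 (hx.mono fun z hz => ?_)
  rcases mem_insert.1 (hCS hz) with rfl | hzS
  · exact mem_insert_self _ _
  · exact mem_insert_of_mem (mem_erase.2 ⟨fun h => hxC (h ▸ hz), hzS⟩)

end Circuits

section Activities

variable {n r : ℕ} {U : Finset ℕ} {B : Finset ℕ}

theorem extActive_iff (hUsub : U ⊆ Icc 1 n) (hUcard : #U = r)
    (hB : B ∈ schubertBases n r U) {e : ℕ} :
    ExtActive (Icc 1 n) (schubertBases n r U) B e ↔ e ∈ Icc 1 n ∧ e ∉ B ∧ ∀ x ∈ B, e < x := by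
  constructor
  · rintro ⟨he, heB, C, hCB, hC, -, hemin⟩
    refine ⟨he, heB, fun x hx => lt_of_not_ge fun hxe => ?_⟩
    have hxe : x < e := lt_of_le_of_ne hxe fun h => heB (h ▸ hx)
    have hexch := insert_erase_mem_schubertBases hUsub hUcard hB hx heB he
      fun k hk hkx => absurd (hk.trans_lt hkx) (not_lt.2 hxe.le)
    have := hemin x (mem_of_famCircuit_of_subset_insert hC hCB ⟨_, hexch, subset_rfl⟩)
    omega
  · rintro ⟨he, heB, hlt⟩
    have hdep : ¬ famIndep (schubertBases n r U) (insert e B) := by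
      rintro ⟨B', hB', hsub⟩
      have := card_le_card hsub
      rw [card_insert_of_notMem heB, ((mem_schubertBases_iff hUsub hUcard).1 hB).2.1,
        ((mem_schubertBases_iff hUsub hUcard).1 hB').2.1] at this
      omega
    obtain ⟨C, hCB, hC, heC⟩ := exists_famCircuit_mem ⟨B, hB, subset_rfl⟩ subset_rfl hdep
    refine ⟨he, heB, C, hCB, hC, heC, fun x hx => ?_⟩
    rcases mem_insert.1 (hCB hx) with rfl | hxB
    · exact le_rfl
    · exact (hlt x hxB).le

theorem extAct_eq_one (hUsub : U ⊆ Icc 1 n) (hUcard : #U = r)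
    (hB : B ∈ schubertBases n r U) (h1B : 1 ∉ B) (h2B : 2 ∈ B) :
    extAct (Icc 1 n) (schubertBases n r U) B = 1 := by
  have hBsub := ((mem_schubertBases_iff hUsub hUcard).1 hB).1
  have hn : 1 ≤ n := by have := mem_Icc.1 (hBsub h2B); omega
  rw [extAct, card_eq_one]
  refine ⟨1, eq_singleton_iff_unique_mem.2 ⟨?_, fun e he => ?_⟩⟩
  · refine mem_filter.2 ⟨by simp [hn], (extActive_iff hUsub hUcard hB).2
      ⟨by simp [hn], h1B, fun x hx => ?_⟩⟩
    have := (mem_Icc.1 (hBsub hx)).1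
    exact lt_of_le_of_ne this fun h => h1B (h ▸ hx)
  · obtain ⟨he, -, hlt⟩ := (extActive_iff hUsub hUcard hB).1 (mem_filter.1 he).2
    have := hlt 2 h2B
    have := (mem_Icc.1 he).1
    omega

/-- A basis avoiding this set would have more elements than `B` in `[1, i - 1]`, hence more
than `U`. -/
theorem not_famIndep_famDual_of_touch (hUsub : U ⊆ Icc 1 n) (hUcard : #U = r)
    (hB : B ∈ schubertBases n r U) {i : ℕ} (hi : i ∈ B)
    (htouch : prefixCount B (i - 1) = prefixCount U (i - 1)) :
    ¬ famIndep (famDual (Icc 1 n) (schubertBases n r U)) (insert i {x ∈ Icc 1 n \ B | i < x}) := by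
  rintro ⟨D, hD, hsub⟩
  obtain ⟨B', hB', rfl⟩ := mem_image.1 hD
  obtain ⟨hBsub, hBcard, -⟩ := (mem_schubertBases_iff hUsub hUcard).1 hB
  obtain ⟨hB'sub, hB'card, hB'U⟩ := (mem_schubertBases_iff hUsub hUcard).1 hB'
  have h0 : ∀ {X : Finset ℕ}, X ⊆ Icc 1 n → 0 ∉ X := fun hX h0 => by simpa using hX h0
  have hi1 : 1 ≤ i := (mem_Icc.1 (hBsub hi)).1
  have hiB' : i ∉ B' := (mem_sdiff.1 (hsub (mem_insert_self _ _))).2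
  have htail : {x ∈ B' | i - 1 < x} ⊆ {x ∈ B.erase i | i - 1 < x} := by
    intro x hx
    obtain ⟨hxB', hix⟩ := mem_filter.1 hx
    have hxi : x ≠ i := fun h => hiB' (h ▸ hxB')
    refine mem_filter.2 ⟨mem_erase.2 ⟨hxi, ?_⟩, hix⟩
    by_contra hxB
    have : x ∈ Icc 1 n \ B' :=
      hsub (mem_insert_of_mem (mem_filter.2 ⟨mem_sdiff.2 ⟨hB'sub hxB', hxB⟩, by omega⟩))
    exact (mem_sdiff.1 this).2 hxB'
  have hcard := card_le_card htail
  rw [filter_erase, card_erase_of_mem (mem_filter.2 ⟨hi, by omega⟩)] at hcard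
  have hsplitB := prefixCount_add_card_filter_lt (h0 hBsub) (i - 1)
  have hsplitB' := prefixCount_add_card_filter_lt (h0 hB'sub) (i - 1)
  have hpos : 0 < #{x ∈ B | i - 1 < x} := card_pos.2 ⟨i, mem_filter.2 ⟨hi, by omega⟩⟩
  have := hB'U (i - 1)
  omega

theorem intActive_iff (hUsub : U ⊆ Icc 1 n) (hUcard : #U = r)
    (hB : B ∈ schubertBases n r U) {i : ℕ} :
    IntActive (Icc 1 n) (schubertBases n r U) B i ↔
      i ∈ B ∧ prefixCount B (i - 1) = prefixCount U (i - 1) := by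
  have hBsub := ((mem_schubertBases_iff hUsub hUcard).1 hB).1
  have hBdual : Icc 1 n \ B ∈ famDual (Icc 1 n) (schubertBases n r U) := mem_image_of_mem _ hB
  constructor
  · rintro ⟨hi, C, hCB, hC, -, himin⟩
    refine ⟨hi, ?_⟩
    by_contra hne
    have hlt := lt_of_le_of_ne (((mem_schubertBases_iff hUsub hUcard).1 hB).2.2 _) hne
    obtain ⟨y, hy, hyB, hslack⟩ := exists_notMem_of_prefixCount_lt hlt
    have hi1 := (mem_Icc.1 (hBsub hi)).1
    have hyn : y ∈ Icc 1 n := by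
      have := (mem_Icc.1 (hBsub hi)).2; simp only [mem_Icc] at hy ⊢; omega
    -- moving `i` down to `y` keeps `B` above `U`, since `path(B)` stays strictly below on `[y, i)`
    have hexch := insert_erase_mem_schubertBases hUsub hUcard hB hi hyB hyn
      fun k hyk hki => hslack k hyk (by omega)
    have hsub : insert i ((Icc 1 n \ B).erase y) ⊆ Icc 1 n \ insert y (B.erase i) := by
      intro z hz
      simp only [mem_insert, mem_erase, mem_sdiff] at hz ⊢
      rcases hz with rfl | ⟨hzy, hz, hzB⟩
      · exact ⟨hBsub hi, by simp only [mem_Icc] at hy; omega⟩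
      · exact ⟨hz, by tauto⟩
    have := himin y (mem_of_famCircuit_of_subset_insert hC hCB
      ⟨_, mem_image_of_mem _ hexch, hsub⟩)
    simp only [mem_Icc] at hy
    omega
  · rintro ⟨hi, htouch⟩
    have hDsub : insert i {x ∈ Icc 1 n \ B | i < x} ⊆ insert i (Icc 1 n \ B) :=
      insert_subset_insert _ (filter_subset _ _)
    obtain ⟨C, hCD, hC, hiC⟩ := exists_famCircuit_mem ⟨_, hBdual, subset_rfl⟩ hDsub
      (not_famIndep_famDual_of_touch hUsub hUcard hB hi htouch)
    refine ⟨hi, C, hCD.trans hDsub, hC, hiC, fun x hx => ?_⟩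
    rcases mem_insert.1 (hCD hx) with rfl | hx
    · exact le_rfl
    · exact (mem_filter.1 hx).2.le

theorem intAct_eq_zero_iff (hUsub : U ⊆ Icc 1 n) (hUcard : #U = r)
    (hB : B ∈ schubertBases n r U) :
    intAct (Icc 1 n) (schubertBases n r U) B = 0 ↔
      ∀ i ∈ B, prefixCount B (i - 1) ≠ prefixCount U (i - 1) := by
  have hBsub := ((mem_schubertBases_iff hUsub hUcard).1 hB).1
  simp only [intAct, card_eq_zero, filter_eq_empty_iff, intActive_iff hUsub hUcard hB, not_and]
  exact ⟨fun h i hi => h (hBsub hi) hi, fun h i _ hi => h i hi⟩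

end Activities

theorem pathPos_succ (s : ℕ × ℕ) {P : List DStep} {k : ℕ} (hk : k < P.length) :
    pathPos s P (k + 1) = ((pathPos s P k).1 + P[k].dx, (pathPos s P k).2 + P[k].dy) := by
  have hlen : ∀ f : DStep → ℕ, k < (P.map f).length := fun f => by simpa using hk
  simp only [pathPos, List.map_take, List.sum_take_succ _ _ (hlen _), List.getElem_map, add_assoc]

theorem pathPos_take_length (s : ℕ × ℕ) (P : List DStep) (k : ℕ) :
    pathPos s (P.take k) (P.take k).length = pathPos s P k := by
  simp only [pathPos, List.take_length]

theorem fullPath_append (P Q : List DStep) :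
    fullPath (P ++ Q) = fullPath P ++ (Q.map expandNE).flatten := by
  simp [fullPath]

theorem length_fullPath (P : List DStep) :
    (fullPath P).length = (pathPos (1, 1) P P.length).1 + (pathPos (1, 1) P P.length).2 := by
  have : List.length ∘ expandNE = fun s => s.dx + s.dy := by
    funext s; cases s <;> rfl
  simp only [fullPath, pathPos, List.length_cons, List.length_flatten, List.map_map, this,
    List.sum_map_add, List.take_length]
  omega

theorem count_north_fullPath (P : List DStep) :
    (fullPath P).count DStep.north = (pathPos (1, 1) P P.length).2 := by
  have : List.count DStep.north ∘ expandNE = DStep.dy := by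
    funext s; cases s <;> rfl
  simp only [fullPath, pathPos, List.count_cons, List.count_flatten, List.map_map, this,
    List.take_length]
  simp only [BEq.rfl, ↓reduceIte, beq_iff_eq, reduceCtorEq, add_zero]
  omega

theorem mem_northSet {L : List DStep} {i : ℕ} :
    i ∈ northSet L ↔ ∃ k, L[k]? = some DStep.north ∧ k + 1 = i := by
  simp only [northSet, mem_image, mem_filter, mem_range]
  refine exists_congr fun k => and_congr_left fun _ => ⟨fun ⟨hk, h⟩ => ?_, fun h => ?_⟩
  · exact List.getElem?_eq_some_iff.2 ⟨hk, by rwa [List.getD_eq_getElem _ _ hk] at h⟩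
  · obtain ⟨hk, h⟩ := List.getElem?_eq_some_iff.1 h
    exact ⟨hk, by rwa [List.getD_eq_getElem _ _ hk]⟩

theorem succ_mem_northSet {L : List DStep} {k : ℕ} :
    k + 1 ∈ northSet L ↔ L[k]? = some DStep.north := by
  simp [mem_northSet]

theorem northSet_subset_Icc (L : List DStep) : northSet L ⊆ Icc 1 L.length := by
  intro i hi
  obtain ⟨k, hk, rfl⟩ := mem_northSet.1 hi
  have := (List.getElem?_eq_some_iff.1 hk).1
  simp only [mem_Icc]
  omega

theorem prefixCount_northSet (L : List DStep) (t : ℕ) :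
    prefixCount (northSet L) t = (L.take t).count DStep.north := by
  induction t with
  | zero => simp [prefixCount_zero]
  | succ t ih =>
    simp only [prefixCount_succ, ih, List.take_add_one, List.count_append, succ_mem_northSet]
    rcases L[t]? with _ | s
    · simp
    · cases s <;> simp

theorem prefixCount_northSet_of_prefix {L M : List DStep} (h : M <+: L) :
    prefixCount (northSet L) M.length = M.count DStep.north := by
  rw [prefixCount_northSet, ← List.prefix_iff_eq_take.1 h]

section DelannoyBasis

variable {P : List DStep}

theorem fullPath_take_prefix (P : List DStep) (k : ℕ) : fullPath (P.take k) <+: fullPath P := by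
  conv_rhs => rw [← List.take_append_drop k P, fullPath_append]
  exact List.prefix_append _ _

theorem prefixCount_delannoyBasis_of_pathPos {k x y : ℕ} (h : pathPos (1, 1) P k = (x, y)) :
    prefixCount (delannoyBasis P) (x + y) = y := by
  have hlen := length_fullPath (P.take k)
  have hcnt := count_north_fullPath (P.take k)
  rw [pathPos_take_length, h] at hlen hcnt
  rw [delannoyBasis, ← hlen, prefixCount_northSet_of_prefix (fullPath_take_prefix P k), hcnt]

theorem prefixCount_delannoyBasis_of_diag {k x y : ℕ} (hk : k < P.length)
    (hd : P[k] = DStep.diag) (h : pathPos (1, 1) P k = (x, y)) :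
    prefixCount (delannoyBasis P) (x + y + 1) = y + 1 := by
  have hpref : fullPath (P.take k) ++ [DStep.north] <+: fullPath P := by
    conv_rhs => rw [← List.take_append_drop k P, ← List.getElem_cons_drop hk, fullPath_append, hd]
    simp [expandNE]
  have hlen := length_fullPath (P.take k)
  have hcnt := count_north_fullPath (P.take k)
  rw [pathPos_take_length, h] at hlen hcnt
  rw [delannoyBasis, show x + y + 1 = (fullPath (P.take k) ++ [DStep.north]).length by simp [hlen],
    prefixCount_northSet_of_prefix hpref, List.count_append, hcnt]
  simp

theorem prefixCount_delannoyBasis_one : prefixCount (delannoyBasis P) 1 = 0 := by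
  simp [delannoyBasis, prefixCount_northSet, fullPath]

theorem one_notMem_delannoyBasis : 1 ∉ delannoyBasis P :=
  fun h => by simpa [prefixCount_zero, prefixCount_delannoyBasis_one] using
    (prefixCount_lt_succ_iff (k := 0)).2 h

theorem two_mem_delannoyBasis : 2 ∈ delannoyBasis P :=
  (succ_mem_northSet (k := 1)).2 (by simp [fullPath])

theorem delannoyBasis_subset_Icc :
    delannoyBasis P ⊆ Icc 1 ((pathPos (1, 1) P P.length).1 + (pathPos (1, 1) P P.length).2) := by
  rw [← length_fullPath]
  exact northSet_subset_Icc _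

/-- `path(B_P)` reaches the vertex `(x, y)` of `P` after `x + y` steps; every other index
`t ≥ 2` along it is the middle `x + y + 1` of a diagonal step. -/
theorem exists_vertex_of_le {k : ℕ} (hk : k ≤ P.length) {t : ℕ} (h2 : 2 ≤ t)
    (ht : t ≤ (pathPos (1, 1) P k).1 + (pathPos (1, 1) P k).2) :
    ∃ m ≤ k, t = (pathPos (1, 1) P m).1 + (pathPos (1, 1) P m).2 ∨
      (m < k ∧ P[m]? = some DStep.diag ∧
        t = (pathPos (1, 1) P m).1 + (pathPos (1, 1) P m).2 + 1) := by
  induction k with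
  | zero => exact ⟨0, le_rfl, Or.inl (by
    simp only [pathPos, List.take_zero, List.map_nil, List.sum_nil, add_zero] at ht ⊢; omega)⟩
  | succ k ih =>
    have hk' : k < P.length := by omega
    by_cases htk : t ≤ (pathPos (1, 1) P k).1 + (pathPos (1, 1) P k).2
    · obtain ⟨m, hm, h⟩ := ih hk'.le htk
      exact ⟨m, by omega, h.imp_right fun h => ⟨by omega, h.2⟩⟩
    by_cases hlast : t = (pathPos (1, 1) P (k + 1)).1 + (pathPos (1, 1) P (k + 1)).2
    · exact ⟨k + 1, le_rfl, Or.inl hlast⟩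
    rw [pathPos_succ _ hk'] at ht hlast
    have hd : P[k] = DStep.diag := by
      cases hs : P[k] <;> simp only [hs, DStep.dx, DStep.dy] at ht hlast <;> first | rfl | omega
    simp only [hd, DStep.dx, DStep.dy] at ht hlast
    exact ⟨k, by omega, Or.inr ⟨by omega, List.getElem?_eq_some_iff.2 ⟨hk', hd⟩, by omega⟩⟩

theorem succ_mem_delannoyBasis {k x y : ℕ} (hk : k < P.length) (hs : P[k] ≠ DStep.east)
    (h : pathPos (1, 1) P k = (x, y)) : x + y + 1 ∈ delannoyBasis P := by
  refine prefixCount_lt_succ_iff.1 ?_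
  rw [prefixCount_delannoyBasis_of_pathPos h]
  have hsucc := pathPos_succ (1, 1) hk
  rw [h] at hsucc
  cases hP : P[k] with
  | east => exact absurd hP hs
  | north =>
    simp only [hP, DStep.dx, DStep.dy, add_zero] at hsucc
    have := prefixCount_delannoyBasis_of_pathPos hsucc
    rw [← add_assoc] at this
    omega
  | diag => rw [prefixCount_delannoyBasis_of_diag hk hP h]; omega

theorem exists_step_of_mem_delannoyBasis {i : ℕ} (hi : i ∈ delannoyBasis P) (h3 : 3 ≤ i) :
    ∃ k, ∃ hk : k < P.length, P[k] ≠ DStep.east ∧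
      i = (pathPos (1, 1) P k).1 + (pathPos (1, 1) P k).2 + 1 := by
  have hjump := prefixCount_lt_succ_iff.2 (show i - 1 + 1 ∈ delannoyBasis P by
    rwa [Nat.sub_add_cancel (by omega)])
  have hi_le := (mem_Icc.1 (delannoyBasis_subset_Icc hi)).2
  obtain ⟨m, hm, hcases⟩ := exists_vertex_of_le (P := P) le_rfl (t := i - 1) (by omega) (by omega)
  obtain ⟨x, y, hxy⟩ : ∃ x y, pathPos (1, 1) P m = (x, y) := ⟨_, _, rfl⟩
  simp only [hxy] at hcases
  rcases hcases with hvert | ⟨hm, hd, hmid⟩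
  · have hm : m < P.length := lt_of_le_of_ne hm fun h => by
      subst h; rw [hxy] at hi_le; omega
    refine ⟨m, hm, fun he => ?_, by rw [hxy]; omega⟩
    have hsucc := pathPos_succ (1, 1) hm
    rw [hxy, he] at hsucc
    simp only [DStep.dx, DStep.dy, add_zero] at hsucc
    have h0 := prefixCount_delannoyBasis_of_pathPos hxy
    have h1 := prefixCount_delannoyBasis_of_pathPos hsucc
    rw [hvert, show x + y + 1 = x + 1 + y by omega] at hjump
    omega
  · obtain ⟨hm', hd⟩ := List.getElem?_eq_some_iff.1 hd
    have hsucc := pathPos_succ (1, 1) hm'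
    rw [hxy, hd] at hsucc
    simp only [DStep.dx, DStep.dy] at hsucc
    have h0 := prefixCount_delannoyBasis_of_diag hm' hd hxy
    have h1 := prefixCount_delannoyBasis_of_pathPos hsucc
    rw [hmid, show x + y + 1 + 1 = x + 1 + (y + 1) by omega] at hjump
    omega

theorem uVertSeg_iff_prefixCount_eq {U : Finset ℕ} {k x y : ℕ} (hk : k < P.length)
    (hs : P[k] ≠ DStep.east) (h : pathPos (1, 1) P k = (x, y))
    (hle : prefixCount (delannoyBasis P) (x + y + 1) ≤ prefixCount U (x + y + 1)) :
    uVertSeg U x y ↔ prefixCount (delannoyBasis P) (x + y) = prefixCount U (x + y) := by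
  have hB0 := prefixCount_delannoyBasis_of_pathPos h
  have hB1 := prefixCount_succ (delannoyBasis P) (x + y)
  rw [if_pos (succ_mem_delannoyBasis hk hs h)] at hB1
  have hU1 := prefixCount_succ U (x + y)
  change x + y + 1 ∈ U ∧ prefixCount U (x + y + 1) = y + 1 ↔ _
  split_ifs at hU1 with hU <;> simp only [hU, true_and, false_and, false_iff] <;> omega

end DelannoyBasis

theorem mem_diagIndices {P : List DStep} {k : ℕ} : k ∈ diagIndices P ↔ P[k]? = some DStep.diag := by
  simp only [diagIndices, mem_filter, mem_range]
  constructor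
  · rintro ⟨hk, h⟩
    exact List.getElem?_eq_some_iff.2 ⟨hk, by rwa [List.getD_eq_getElem _ _ hk] at h⟩
  · intro h
    obtain ⟨hk, h⟩ := List.getElem?_eq_some_iff.1 h
    exact ⟨hk, by rwa [List.getD_eq_getElem _ _ hk]⟩

theorem diagIndices_cons_eq_iff {s t : DStep} {P Q : List DStep} :
    diagIndices (s :: P) = diagIndices (t :: Q) ↔
      (s = DStep.diag ↔ t = DStep.diag) ∧ diagIndices P = diagIndices Q := by
  simp only [Finset.ext_iff, mem_diagIndices]
  constructor
  · intro h
    exact ⟨by simpa using h 0, fun k => by simpa using h (k + 1)⟩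
  · rintro ⟨h0, h⟩ (_ | k)
    · simpa using h0
    · simpa using h k

/-- `fullPath` forgets which north-east corners were diagonal steps; `diagIndices` remembers it. -/
theorem eq_of_flatten_map_expandNE_eq :
    ∀ {P Q : List DStep}, (P.map expandNE).flatten = (Q.map expandNE).flatten →
      diagIndices P = diagIndices Q → P = Q
  | [], [], _, _ => rfl
  | [], t :: Q, h, _ | t :: Q, [], h, _ => by cases t <;> simp [expandNE] at h
  | s :: P, t :: Q, h, hD => by
    obtain ⟨hst, hPQ⟩ := diagIndices_cons_eq_iff.1 hD
    cases s <;> cases t <;>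
      simp only [reduceCtorEq, iff_true, iff_false, not_true_eq_false, List.map_cons, expandNE,
        List.flatten_cons, List.cons_append, List.nil_append, List.cons.injEq, true_and,
        false_and] at hst h ⊢ <;>
      exact eq_of_flatten_map_expandNE_eq h hPQ

theorem eq_of_northSet_eq {L M : List DStep} (hlen : L.length = M.length)
    (hL : DStep.diag ∉ L) (hM : DStep.diag ∉ M) (h : northSet L = northSet M) : L = M := by
  refine List.ext_getElem hlen fun k hkL hkM => ?_
  have hnorth : L[k] = DStep.north ↔ M[k] = DStep.north := by
    simpa [succ_mem_northSet, List.getElem?_eq_getElem hkL, List.getElem?_eq_getElem hkM] using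
      (Finset.ext_iff.1 h (k + 1))
  have hLk : L[k] ≠ DStep.diag := fun h' => hL (h' ▸ List.getElem_mem hkL)
  have hMk : M[k] ≠ DStep.diag := fun h' => hM (h' ▸ List.getElem_mem hkM)
  cases hl : L[k] <;> cases hm : M[k] <;> simp_all

theorem diag_notMem_fullPath (P : List DStep) : DStep.diag ∉ fullPath P := by
  simp only [fullPath, List.mem_cons, reduceCtorEq, false_or, List.mem_flatten, List.mem_map]
  rintro ⟨_, ⟨s, -, rfl⟩, hs⟩
  cases s <;> simp [expandNE] at hs

section Delannoy

variable {n r : ℕ} {U : Finset ℕ} {P : List DStep}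

theorem IsDelannoy.length_fullPath (hUsub : U ⊆ Icc 1 n) (hUcard : #U = r)
    (hP : IsDelannoy n r U P) : (fullPath P).length = n := by
  have hrn : r ≤ n := by simpa [hUcard] using card_le_card hUsub
  rw [GPoly.length_fullPath, hP.1]
  omega

theorem IsDelannoy.card_delannoyBasis (hP : IsDelannoy n r U P) : #(delannoyBasis P) = r := by
  rw [← prefixCount_of_subset_Icc delannoyBasis_subset_Icc le_rfl, hP.1]
  exact prefixCount_delannoyBasis_of_pathPos hP.1

theorem IsDelannoy.delannoyBasis_subset (hUsub : U ⊆ Icc 1 n) (hUcard : #U = r)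
    (hP : IsDelannoy n r U P) : delannoyBasis P ⊆ Icc 1 n := by
  rw [← hP.length_fullPath hUsub hUcard]
  exact northSet_subset_Icc _

theorem IsDelannoy.eq_of_delannoyBasis_eq (hUsub : U ⊆ Icc 1 n) (hUcard : #U = r)
    {Q : List DStep} (hP : IsDelannoy n r U P) (hQ : IsDelannoy n r U Q)
    (hB : delannoyBasis P = delannoyBasis Q) (hD : diagIndices P = diagIndices Q) : P = Q := by
  have hfull := eq_of_northSet_eq
    ((hP.length_fullPath hUsub hUcard).trans (hQ.length_fullPath hUsub hUcard).symm)
    (diag_notMem_fullPath P) (diag_notMem_fullPath Q) hB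
  simp only [fullPath, List.cons.injEq, true_and] at hfull
  exact eq_of_flatten_map_expandNE_eq hfull hD

theorem IsDelannoy.delannoyBasis_mem_schubertBases_iff (hUsub : U ⊆ Icc 1 n) (hUcard : #U = r)
    (hP : IsDelannoy n r U P) :
    delannoyBasis P ∈ schubertBases n r U ↔ ∀ k (hk : k < P.length), P[k] = DStep.diag →
      belowPath U ((pathPos (1, 1) P k).1, (pathPos (1, 1) P k).2 + 1) := by
  rw [mem_schubertBases_iff hUsub hUcard]
  constructor
  · rintro ⟨-, -, hle⟩ k hk hd
    obtain ⟨x, y, hxy⟩ : ∃ x y, pathPos (1, 1) P k = (x, y) := ⟨_, _, rfl⟩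
    rw [hxy]
    change y + 1 ≤ prefixCount U (x + y + 1)
    rw [← prefixCount_delannoyBasis_of_diag hk hd hxy]
    exact hle _
  refine fun hdiag => ⟨hP.delannoyBasis_subset hUsub hUcard, hP.card_delannoyBasis, fun t => ?_⟩
  have hlen := hP.length_fullPath hUsub hUcard
  rw [GPoly.length_fullPath] at hlen
  rcases Nat.lt_or_ge t 2 with ht | ht
  · have := prefixCount_mono (delannoyBasis P) (show t ≤ 1 by omega)
    rw [prefixCount_delannoyBasis_one] at this
    omega
  rcases Nat.lt_or_ge t n with htn | htn
  · obtain ⟨m, hm, hcases⟩ := exists_vertex_of_le (P := P) le_rfl ht (by omega)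
    obtain ⟨x, y, hxy⟩ : ∃ x y, pathPos (1, 1) P m = (x, y) := ⟨_, _, rfl⟩
    have hbelow := hP.2 m hm
    rw [hxy] at hcases hbelow
    rcases hcases with hvert | ⟨hm, hd, hmid⟩
    · rw [hvert, prefixCount_delannoyBasis_of_pathPos hxy]
      exact hbelow
    · obtain ⟨hm, hd⟩ := List.getElem?_eq_some_iff.1 hd
      have := hdiag m hm hd
      rw [hxy] at this
      rw [hmid, prefixCount_delannoyBasis_of_diag hm hd hxy]
      exact this
  · rw [prefixCount_of_subset_Icc (hP.delannoyBasis_subset hUsub hUcard) htn,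
      prefixCount_of_subset_Icc hUsub htn, hP.card_delannoyBasis, hUcard]

end Delannoy

section Admissible

variable {n r : ℕ} {U : Finset ℕ} {P : List DStep}

theorem IsAdmissible.intAct_eq_zero (hUsub : U ⊆ Icc 1 n) (hUcard : #U = r) (h1U : 1 ∈ U)
    (hnU : n ∉ U) (hadm : IsAdmissible n r U P) (hB : delannoyBasis P ∈ schubertBases n r U) :
    intAct (Icc 1 n) (schubertBases n r U) (delannoyBasis P) = 0 := by
  have hle := ((mem_schubertBases_iff hUsub hUcard).1 hB).2.2
  rw [intAct_eq_zero_iff hUsub hUcard hB]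
  intro i hi htouch
  rcases Nat.lt_or_ge i 3 with hi3 | hi3
  · -- `i = 2`; but `path(U)` starts with a north step while `path(B_P)` starts with an east step
    have hi1 := (mem_Icc.1 (hadm.1.delannoyBasis_subset hUsub hUcard hi)).1
    obtain rfl : i = 2 := by
      have : i ≠ 1 := fun h => one_notMem_delannoyBasis (h ▸ hi)
      omega
    have hU1 := (prefixCount_lt_succ_iff (k := 0)).2 h1U
    rw [prefixCount_zero, zero_add] at hU1
    rw [show 2 - 1 = 1 from rfl, prefixCount_delannoyBasis_one] at htouch
    omega
  obtain ⟨k, hk, hs, rfl⟩ := exists_step_of_mem_delannoyBasis hi hi3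
  obtain ⟨x, y, hxy⟩ : ∃ x y, pathPos (1, 1) P k = (x, y) := ⟨_, _, rfl⟩
  simp only [hxy, Nat.add_sub_cancel] at htouch
  have hseg := (uVertSeg_iff_prefixCount_eq hk hs hxy (hle _)).2 htouch
  have hstep := hadm.2 k hk
  simp only [List.get_eq_getElem, hxy] at hstep
  cases hPk : P[k] with
  | east => exact hs hPk
  | north =>
    rcases hstep.1 hPk with hfin | hno
    · have hrn : r ≤ n := by simpa [hUcard] using card_le_card hUsub
      have hsucc := pathPos_succ (1, 1) hk
      rw [hxy, hPk, hfin] at hsucc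
      simp only [DStep.dx, DStep.dy, add_zero, Prod.mk.injEq] at hsucc
      exact hnU (by rw [show n = x + y + 1 by omega]; exact hseg.1)
    · exact hno hseg
  | diag => exact (hstep.2 hPk).2 hseg

theorem IsDelannoy.isAdmissible_of_intAct_eq_zero (hUsub : U ⊆ Icc 1 n) (hUcard : #U = r)
    (hP : IsDelannoy n r U P) (hB : delannoyBasis P ∈ schubertBases n r U)
    (hint : intAct (Icc 1 n) (schubertBases n r U) (delannoyBasis P) = 0) :
    IsAdmissible n r U P := by
  have hle := ((mem_schubertBases_iff hUsub hUcard).1 hB).2.2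
  rw [intAct_eq_zero_iff hUsub hUcard hB] at hint
  refine ⟨hP, fun k hk => ?_⟩
  obtain ⟨x, y, hxy⟩ : ∃ x y, pathPos (1, 1) P k = (x, y) := ⟨_, _, rfl⟩
  have hno : P[k] ≠ DStep.east → ¬ uVertSeg U x y := fun hs hseg =>
    hint _ (succ_mem_delannoyBasis hk hs hxy)
      (by simpa using (uVertSeg_iff_prefixCount_eq hk hs hxy (hle _)).1 hseg)
  have hbelow := (hP.delannoyBasis_mem_schubertBases_iff hUsub hUcard).1 hB k hk
  simp only [List.get_eq_getElem, hxy] at hbelow ⊢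
  exact ⟨fun hN => Or.inr (hno (by simp [hN])), fun hD => ⟨hbelow hD, hno (by simp [hD])⟩⟩

theorem IsDelannoy.isAdmissible_iff (hUsub : U ⊆ Icc 1 n) (hUcard : #U = r) (h1U : 1 ∈ U)
    (hnU : n ∉ U) (hP : IsDelannoy n r U P) :
    IsAdmissible n r U P ↔
      delannoyBasis P ∈ schubertBases n r U ∧
        intAct (Icc 1 n) (schubertBases n r U) (delannoyBasis P) = 0 ∧
        extAct (Icc 1 n) (schubertBases n r U) (delannoyBasis P) = 1 := by
  constructor
  · intro hadm
    have hB := (hP.delannoyBasis_mem_schubertBases_iff hUsub hUcard).2 fun k hk hd =>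
      ((hadm.2 k hk).2 (by simpa using hd)).1
    exact ⟨hB, hadm.intAct_eq_zero hUsub hUcard h1U hnU hB,
      extAct_eq_one hUsub hUcard hB one_notMem_delannoyBasis two_mem_delannoyBasis⟩
  · rintro ⟨hB, hint, -⟩
    exact hP.isAdmissible_of_intAct_eq_zero hUsub hUcard hB hint

end Admissible

/-- For a loopless and coloopless Schubert matroid `SM(U)` on `[n]` of
rank `r`: (a) the map sending a Delannoy path `P` associated to `SM(U)` to the pair
`(B_P, D_P)`, where `D_P` is the set of indices of the diagonal steps of `P`, is
injective; and (b) a Delannoy path `P` associated to `SM(U)` is admissible if and only if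
`B_P` is a basis of `SM(U)` with `i(B_P) = 0` and `e(B_P) = 1`. -/
theorem statement2 (n r : ℕ) (U : Finset ℕ) (hUsub : U ⊆ Finset.Icc 1 n)
    (hUcard : U.card = r)
    (hloopless : ∀ e ∈ Finset.Icc 1 n, ∃ B ∈ schubertBases n r U, e ∈ B)
    (hcoloopless : ∀ e ∈ Finset.Icc 1 n, ∃ B ∈ schubertBases n r U, e ∉ B) :
    (∀ P Q : List DStep, IsDelannoy n r U P → IsDelannoy n r U Q →
      delannoyBasis P = delannoyBasis Q → diagIndices P = diagIndices Q → P = Q) ∧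
    (∀ P : List DStep, IsDelannoy n r U P →
      (IsAdmissible n r U P ↔
        delannoyBasis P ∈ schubertBases n r U ∧
        intAct (Finset.Icc 1 n) (schubertBases n r U) (delannoyBasis P) = 0 ∧
        extAct (Finset.Icc 1 n) (schubertBases n r U) (delannoyBasis P) = 1)) := by
  refine ⟨fun P Q hP hQ => hP.eq_of_delannoyBasis_eq hUsub hUcard hQ, fun P hP => ?_⟩
  have hn : 2 ≤ n := (mem_Icc.1 (hP.delannoyBasis_subset hUsub hUcard two_mem_delannoyBasis)).2
  obtain ⟨B₁, hB₁, h1B₁⟩ := hloopless 1 (mem_Icc.2 ⟨le_rfl, by omega⟩)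
  obtain ⟨B₂, hB₂, hnB₂⟩ := hcoloopless n (mem_Icc.2 ⟨by omega, le_rfl⟩)
  exact hP.isAdmissible_iff hUsub hUcard (one_mem_of_mem_schubertBases hUsub hUcard hB₁ h1B₁)
    (notMem_of_notMem_schubertBases hUsub hUcard hB₂ hnB₂)
end GPoly
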